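/- Let S be a semigroup that is a finite disjoint union of free monogenic subsemigroups N_a = ⟨a⟩ (a ∈ A). Then the collection of sets { T(a,x,b) : a, b ∈ A, x ∈ S }, where T(a,x,b) = { y ∈ N_a : y·x ∈ N_b }, is finite. -/

import Mathlib

/-- `spow a n` is the `n`-th power of `a` in a semigroup, for `n ≥ 1`
(with the junk value `a` at `n = 0`). -/
def spow {S : Type*} [Semigroup S] (a : S) : ℕ → S
  | 0 => a
  | 1 => a
  | (n + 2) => spow a (n + 1) * a

/-- The subsemigroup (as a set) generated by `a`: all positive powers of `a`. -/
def Nblock {S : Type*} [Semigroup S] (a : S) : Set S :=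
  {x | ∃ i : ℕ, 1 ≤ i ∧ x = spow a i}

/-- `Tset a x b = { y ∈ N_a : y * x ∈ N_b }`. -/
def Tset {S : Type*} [Semigroup S] (a x b : S) : Set S :=
  {y | y ∈ Nblock a ∧ y * x ∈ Nblock b}

/-!
The rigidity fact behind everything is that multiplication never lowers an exponent inside a
block: `v * c^g = c^g'` forces `g ≤ g'`. Consequently, once an orbit `i ↦ y^i x` meets the same
block at two steps `i < j`, it stays in that block along `i + ℕ (j - i)` with exponents growing
linearly; the same holds for right orbits `m ↦ w z^m`. The latter makes every fibre of
`m ↦ block (w z^m)` closed under arithmetic progressions, so these sequences are eventually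
periodic. A repetition of blocks occurs within the first `|A| + 1` steps of any left orbit, so
`i ↦ block (a^i x)` is eventually periodic with preperiod and period bounded independently of
`x`. Hence each index set `{i | a^i x ∈ N_b}` is determined by its intersection with a fixed
initial segment of `ℕ`.
-/

open scoped Nat

section Powers

variable {S : Type*} [Semigroup S]

lemma spow_succ (a : S) {n : ℕ} (hn : 1 ≤ n) : spow a (n + 1) = spow a n * a := by
  obtain ⟨m, rfl⟩ := Nat.exists_eq_add_of_le' hn
  rfl

lemma spow_add (a : S) {m n : ℕ} (hm : 1 ≤ m) (hn : 1 ≤ n) :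
    spow a (m + n) = spow a m * spow a n := by
  induction n, hn using Nat.le_induction with
  | base => exact spow_succ a hm
  | succ n hn ih => rw [← add_assoc, spow_succ a (by omega), ih, spow_succ a hn, mul_assoc]

lemma mul_spow_add {s a : S} {p q : ℕ} (hp : 1 ≤ p) (hq : 1 ≤ q)
    (h : s * spow a p = spow a q) (t : ℕ) : s * spow a (p + t) = spow a (q + t) := by
  rcases Nat.eq_zero_or_pos t with rfl | ht
  · exact h
  · rw [spow_add a hp ht, spow_add a hq ht, ← mul_assoc, h]

lemma spow_op (a : S) : ∀ n, spow (MulOpposite.op a) n = MulOpposite.op (spow a n)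
  | 0 => rfl
  | 1 => rfl
  | n + 2 => by
    rw [spow, spow_op a (n + 1), ← MulOpposite.op_mul, show n + 2 = 1 + (n + 1) by omega,
      spow_add a le_rfl (by omega)]
    rfl

end Powers

def PeriodicFrom {β : Type*} (σ : ℕ → β) (Q P : ℕ) : Prop :=
  ∀ m, Q ≤ m → σ (m + P) = σ m

namespace PeriodicFrom

variable {β γ : Type*} {σ : ℕ → β} {Q P : ℕ}

lemma mono (h : PeriodicFrom σ Q P) {Q' : ℕ} (hQ : Q ≤ Q') : PeriodicFrom σ Q' P :=
  fun m hm => h m (hQ.trans hm)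

lemma mul (h : PeriodicFrom σ Q P) (k : ℕ) : PeriodicFrom σ Q (k * P) := by
  intro m hm
  induction k with
  | zero => simp
  | succ k ih => rw [add_one_mul, ← add_assoc, h _ (by omega), ih]

lemma dvd (h : PeriodicFrom σ Q P) {L : ℕ} (hPL : P ∣ L) : PeriodicFrom σ Q L := by
  obtain ⟨k, rfl⟩ := hPL
  simpa only [mul_comm] using h.mul k

lemma comp (h : PeriodicFrom σ Q P) (f : β → γ) : PeriodicFrom (f ∘ σ) Q P :=
  fun m hm => congrArg f (h m hm)

lemma of_succ (h : PeriodicFrom (fun m => σ (m + 1)) Q P) : PeriodicFrom σ (Q + 1) P := by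
  intro m hm
  obtain ⟨k, rfl⟩ : ∃ k, m = k + 1 := ⟨m - 1, by omega⟩
  simpa only [add_right_comm] using h k (by omega)

lemma of_fibers (h : ∀ b, PeriodicFrom (fun m => σ m = b) Q P) : PeriodicFrom σ Q P :=
  fun m hm => Eq.mpr (h (σ m) m hm) rfl

lemma comp_add_mul (h : PeriodicFrom σ Q P) (p Δ : ℕ) :
    PeriodicFrom (fun l => σ (p + l * Δ)) Q P := by
  intro l hl
  rcases Nat.eq_zero_or_pos Δ with rfl | hΔ
  · simp
  · have : l ≤ l * Δ := Nat.le_mul_of_pos_right l hΔ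
    simpa only [add_mul, ← add_assoc, mul_comm P Δ] using h.mul Δ (p + l * Δ) (by omega)

end PeriodicFrom

lemma periodicFrom_of_forall_add_mul_add {β : Type*} {σ : ℕ → β} {τ : ℕ → ℕ → β}
    {i d Q P : ℕ} (hd : 0 < d) (hσ : ∀ l u, u < d → σ (i + l * d + u) = τ u l)
    (hτ : ∀ u < d, PeriodicFrom (τ u) Q P) : PeriodicFrom σ (i + Q * d) (d * P) := by
  intro k hk
  obtain ⟨l, u, hu, rfl⟩ : ∃ l u, u < d ∧ k = i + l * d + u :=
    ⟨(k - i) / d, (k - i) % d, Nat.mod_lt _ hd, by have := Nat.div_add_mod' (k - i) d; omega⟩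
  have hl : Q ≤ l := by
    by_contra! hl
    nlinarith
  rw [show i + l * d + u + d * P = i + (l + P) * d + u by ring, hσ _ _ hu, hσ _ _ hu,
    hτ u hu l hl]

lemma exists_periodicFrom_forall {ι β : Type*} [Finite ι] {σ : ι → ℕ → β}
    (h : ∀ j, ∃ Q P, 0 < P ∧ PeriodicFrom (σ j) Q P) :
    ∃ Q P, 0 < P ∧ ∀ j, PeriodicFrom (σ j) Q P := by
  choose Q P hP hσ using h
  have := Fintype.ofFinite ι
  exact ⟨Finset.univ.sup Q, ∏ j, P j, Finset.prod_pos fun j _ => hP j, fun j =>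
    ((hσ j).mono (Finset.le_sup (Finset.mem_univ j))).dvd
      (Finset.dvd_prod_of_mem P (Finset.mem_univ j))⟩

lemma setOf_periodicFrom_mem_finite {N L : ℕ} (hL : 0 < L) :
    {I : Set ℕ | PeriodicFrom (· ∈ I) N L}.Finite := by
  refine Set.Finite.of_finite_image (f := fun I => I ∩ Set.Iio (N + L))
    ((Set.finite_Iio (N + L)).finite_subsets.subset ?_) ?_
  · rintro _ ⟨I, -, rfl⟩
    exact Set.inter_subset_right
  · intro I hI J hJ hIJ
    ext m
    induction m using Nat.strong_induction_on with
    | _ m ih =>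
      by_cases hm : m < N + L
      · simpa [hm] using congrArg (m ∈ ·) hIJ
      · obtain ⟨k, rfl⟩ : ∃ k, m = k + L := ⟨m - L, by omega⟩
        exact (hI k (by omega)).to_iff.trans
          ((ih k (by omega)).trans (hJ k (by omega)).to_iff.symm)

lemma exists_periodicFrom_mem_of_add_mul_sub_mem {O : Set ℕ}
    (hO : ∀ x ∈ O, ∀ y ∈ O, x < y → ∀ l, x + l * (y - x) ∈ O) :
    ∃ Q P, 0 < P ∧ PeriodicFrom (· ∈ O) Q P := by
  classical
  by_cases hfin : O.Finite
  · obtain ⟨B, hB⟩ := hfin.bddAbove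
    refine ⟨B + 1, 1, one_pos, fun m hm => propext ⟨fun h => ?_, fun h => ?_⟩⟩ <;>
      · have := hB h
        omega
  have hex : ∃ d, 0 < d ∧ ∃ x ∈ O, ∀ k, x + k * d ∈ O := by
    obtain ⟨x, hx⟩ := Set.Infinite.nonempty hfin
    obtain ⟨y, hy, hxy⟩ := Set.Infinite.exists_gt hfin x
    exact ⟨y - x, by omega, x, hx, hO x hx y hy hxy⟩
  obtain ⟨hd, x₀, -, hAP⟩ := Nat.find_spec hex
  set d := Nat.find hex
  -- a point of `O` off the residue class of `x₀` would start a progression with a smaller step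
  have hchar : ∀ m, x₀ < m → (m ∈ O ↔ d ∣ m - x₀) := by
    intro m hm
    refine ⟨fun h => Nat.dvd_of_mod_eq_zero (by_contra fun ho => ?_), fun ⟨k, hk⟩ => ?_⟩
    · have hdiv := Nat.div_add_mod' (m - x₀) d
      have hgap : m - (x₀ + (m - x₀) / d * d) = (m - x₀) % d := by omega
      have hstep := hO _ (hAP ((m - x₀) / d)) m h (by omega)
      rw [hgap] at hstep
      exact absurd (Nat.find_min' hex ⟨Nat.pos_of_ne_zero ho, _, hAP _, hstep⟩)
        (not_le.2 (Nat.mod_lt _ hd))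
    · simpa only [show x₀ + k * d = m by rw [mul_comm]; omega] using hAP k
  refine ⟨x₀ + 1, d, hd, fun m hm => propext ?_⟩
  dsimp only
  rw [hchar _ (by omega), hchar m (by omega), show m + d - x₀ = m - x₀ + d by omega,
    Nat.dvd_add_self_right]

lemma exists_lt_le_natCard_map_eq {A : Type*} [Finite A] (σ : ℕ → A) :
    ∃ i j, i < j ∧ j ≤ Nat.card A ∧ σ i = σ j := by
  have := Fintype.ofFinite A
  obtain ⟨i, j, hne, h⟩ := Fintype.exists_ne_map_eq_of_card_lt
    (fun k : Fin (Nat.card A + 1) => σ k) (by simp [Nat.card_eq_fintype_card])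
  have hi := Fin.is_le i
  have hj := Fin.is_le j
  rcases lt_or_gt_of_ne (Fin.val_ne_of_ne hne) with hlt | hlt
  · exact ⟨i, j, hlt, hj, h⟩
  · exact ⟨j, i, hlt, hi, h.symm⟩

structure IsFreeMonogenicDecomposition {S A : Type*} [Semigroup S] (gen : A → S) : Prop where
  cover : ∀ x : S, ∃ a, x ∈ Nblock (gen a)
  free : ∀ (a b : A) (i j : ℕ), 1 ≤ i → 1 ≤ j →
    spow (gen a) i = spow (gen b) j → a = b ∧ i = j

namespace IsFreeMonogenicDecomposition

variable {S A : Type*} [Semigroup S] {gen : A → S} (hS : IsFreeMonogenicDecomposition gen)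
include hS

noncomputable def block (s : S) : A := (hS.cover s).choose

lemma exists_eq_spow_block (s : S) : ∃ k, 1 ≤ k ∧ s = spow (gen (hS.block s)) k :=
  (hS.cover s).choose_spec

lemma block_spow {c : A} {k : ℕ} (hk : 1 ≤ k) : hS.block (spow (gen c) k) = c := by
  obtain ⟨j, hj, h⟩ := hS.exists_eq_spow_block (spow (gen c) k)
  exact (hS.free _ _ _ _ hk hj h).1.symm

lemma mem_Nblock_iff {s : S} {c : A} : s ∈ Nblock (gen c) ↔ hS.block s = c :=
  ⟨fun ⟨_, hk, h⟩ => h ▸ hS.block_spow hk, fun h => h ▸ hS.exists_eq_spow_block s⟩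

lemma block_ne_of_mul_eq_right {s t : S} (h : s * t = t) : hS.block s ≠ hS.block t := by
  intro hst
  obtain ⟨i, hi, hs⟩ := hS.exists_eq_spow_block s
  obtain ⟨j, hj, ht⟩ := hS.exists_eq_spow_block t
  rw [hs, ht, hst, ← spow_add _ hi hj] at h
  have := (hS.free _ _ _ _ (by omega) hj h).2
  omega

lemma op : IsFreeMonogenicDecomposition fun a => MulOpposite.op (gen a) where
  cover x := by
    obtain ⟨a, i, hi, h⟩ := hS.cover x.unop
    exact ⟨a, i, hi, by rw [spow_op, ← h, MulOpposite.op_unop]⟩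
  free a b i j hi hj h := by
    rw [spow_op, spow_op] at h
    exact hS.free a b i j hi hj (MulOpposite.op_injective h)

-- If `g = g' + r`, then `C K := c^(K r) * v^K` satisfies `C K' * C K = C K` for `K ≥ K' + g'`,
-- and two such `C`s in a common block contradict freeness.
theorem le_of_mul_spow_eq [Finite A] {v : S} {c : A} {g g' : ℕ} (hg : 1 ≤ g) (hg' : 1 ≤ g')
    (h : v * spow (gen c) g = spow (gen c) g') : g ≤ g' := by
  by_contra! hlt
  obtain ⟨r, hr, rfl⟩ : ∃ r, 1 ≤ r ∧ g = g' + r := ⟨g - g', by omega, by omega⟩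
  have hstep : ∀ m, g' + r ≤ m → v * spow (gen c) m = spow (gen c) (m - r) := by
    intro m hm
    obtain ⟨t, rfl⟩ := Nat.exists_eq_add_of_le hm
    rw [show g' + r + t - r = g' + t by omega]
    exact mul_spow_add hg hg' h t
  have hlower : ∀ K, 1 ≤ K → ∀ m, g' + K * r ≤ m →
      spow v K * spow (gen c) m = spow (gen c) (m - K * r) := by
    intro K hK
    induction K, hK using Nat.le_induction with
    | base =>
      intro m hm
      rw [one_mul] at hm ⊢
      exact hstep m hm
    | succ K hK ih =>
      intro m hm
      rw [add_one_mul] at hm ⊢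
      rw [add_comm K, spow_add v le_rfl hK, mul_assoc, ih m (by omega), spow, hstep _ (by omega),
        Nat.sub_sub]
  set C : ℕ → S := fun K => spow (gen c) (K * r) * spow v K
  have hC : ∀ K' K, 1 ≤ K' → K' + g' ≤ K → C K' * C K = C K := by
    intro K' K hK' hK
    have h₁ : K' * r + g' ≤ K * r := by nlinarith
    have h₂ : 1 ≤ K' * r := by nlinarith
    calc C K' * C K = spow (gen c) (K' * r) * (spow v K' * spow (gen c) (K * r)) * spow v K := by
          simp only [C, mul_assoc]
      _ = C K := by
          rw [hlower K' hK' _ (by omega), ← spow_add _ h₂ (by omega),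
            Nat.add_sub_cancel' (by omega)]
  obtain ⟨i, j, hij, -, hblock⟩ :=
    exists_lt_le_natCard_map_eq fun k => hS.block (C (k * (g' + 1) + 1))
  refine hS.block_ne_of_mul_eq_right (hC _ _ le_add_self ?_) hblock
  nlinarith

lemma exists_spow_add_mul_mul_eq [Finite A] {y x : S} {c : A} {i d p q : ℕ} (hi : 1 ≤ i)
    (hd : 1 ≤ d) (hp : 1 ≤ p) (hq : 1 ≤ q) (h₁ : spow y i * x = spow (gen c) p)
    (h₂ : spow y (i + d) * x = spow (gen c) q) :
    ∃ Δ, ∀ l, spow y (i + l * d) * x = spow (gen c) (p + l * Δ) := by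
  have hstep : spow y d * spow (gen c) p = spow (gen c) q := by
    rw [← h₁, ← mul_assoc, ← spow_add _ hd hi, add_comm, h₂]
  have hpq := hS.le_of_mul_spow_eq hp hq hstep
  refine ⟨q - p, fun l => ?_⟩
  induction l with
  | zero => simpa using h₁
  | succ l ih =>
    have : 1 ≤ i + l * d := by omega
    rw [show i + (l + 1) * d = d + (i + l * d) by ring, spow_add _ hd this, mul_assoc, ih,
      mul_spow_add hp hq hstep, add_one_mul]
    congr 1
    omega

lemma exists_mul_spow_add_mul_eq [Finite A] {w z : S} {c : A} {i d p q : ℕ} (hi : 1 ≤ i)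
    (hd : 1 ≤ d) (hp : 1 ≤ p) (hq : 1 ≤ q) (h₁ : w * spow z i = spow (gen c) p)
    (h₂ : w * spow z (i + d) = spow (gen c) q) :
    ∃ Δ, ∀ l, w * spow z (i + l * d) = spow (gen c) (p + l * Δ) := by
  obtain ⟨Δ, hΔ⟩ := hS.op.exists_spow_add_mul_mul_eq (y := MulOpposite.op z)
    (x := MulOpposite.op w) hi hd hp hq (by rw [spow_op, spow_op, ← MulOpposite.op_mul, h₁])
    (by rw [spow_op, spow_op, ← MulOpposite.op_mul, h₂])
  refine ⟨Δ, fun l => MulOpposite.op_injective ?_⟩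
  rw [MulOpposite.op_mul, ← spow_op, hΔ, spow_op]

theorem exists_periodicFrom_block_mul_spow [Finite A] (w z : S) :
    ∃ Q P, 0 < P ∧ PeriodicFrom (fun m => hS.block (w * spow z m)) Q P := by
  have hfiber : ∀ c, ∃ Q P, 0 < P ∧
      PeriodicFrom (fun m => hS.block (w * spow z (m + 1)) = c) Q P := by
    intro c
    refine exists_periodicFrom_mem_of_add_mul_sub_mem (O := {m | hS.block (w * spow z (m + 1)) = c})
      fun x hx y hy hxy l => ?_
    obtain ⟨p, hp, hxp⟩ := hS.exists_eq_spow_block (w * spow z (x + 1))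
    obtain ⟨q, hq, hyq⟩ := hS.exists_eq_spow_block (w * spow z (y + 1))
    rw [show hS.block _ = c from hx] at hxp
    rw [show hS.block _ = c from hy, ← show x + 1 + (y - x) = y + 1 by omega] at hyq
    obtain ⟨Δ, hΔ⟩ := hS.exists_mul_spow_add_mul_eq le_add_self (by omega) hp hq hxp hyq
    show hS.block (w * spow z (x + l * (y - x) + 1)) = c
    rw [add_right_comm, hΔ, hS.block_spow (by omega)]
  obtain ⟨Q, P, hP, h⟩ := exists_periodicFrom_forall hfiber
  exact ⟨Q + 1, P, hP, (PeriodicFrom.of_fibers h).of_succ⟩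

theorem exists_periodicFrom_block_spow_mul [Finite A] (y : S) :
    ∃ N L, 0 < L ∧ ∀ x, PeriodicFrom (fun i => hS.block (spow y i * x)) N L := by
  set n := Nat.card A
  obtain ⟨Q, P, hP, hcol⟩ := exists_periodicFrom_forall (ι := Fin n × A)
    (σ := fun uc m => hS.block (spow y (uc.1 + 1) * spow (gen uc.2) m))
    fun uc => hS.exists_periodicFrom_block_mul_spow _ _
  refine ⟨n + 1 + Q * n, n ! * P, by positivity, fun x => ?_⟩
  obtain ⟨i, j, hij, hjn, hblock⟩ :=
    exists_lt_le_natCard_map_eq fun k => hS.block (spow y (k + 1) * x)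
  obtain ⟨p, hp, hxp⟩ := hS.exists_eq_spow_block (spow y (i + 1) * x)
  obtain ⟨q, hq, hxq⟩ := hS.exists_eq_spow_block (spow y (j + 1) * x)
  set ζ := hS.block (spow y (i + 1) * x)
  rw [← show ζ = _ from hblock, ← show i + 1 + (j - i) = j + 1 by omega] at hxq
  obtain ⟨Δ, hΔ⟩ := hS.exists_spow_add_mul_mul_eq le_add_self (by omega) hp hq hxp hxq
  have hσ : PeriodicFrom (fun k => hS.block (spow y k * x)) (i + 2 + Q * (j - i)) ((j - i) * P) :=
    periodicFrom_of_forall_add_mul_add (τ := fun u l => hS.block (spow y (u + 1) *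
        spow (gen ζ) (p + l * Δ))) (by omega)
      (fun l u _ => by
        rw [show i + 2 + l * (j - i) + u = (u + 1) + (i + 1 + l * (j - i)) by ring,
          spow_add _ le_add_self (by omega), mul_assoc, hΔ])
      fun u hu => (hcol (⟨u, by omega⟩, ζ)).comp_add_mul p Δ
  have hd : j - i ≤ n := by omega
  exact (hσ.mono (by nlinarith [Nat.mul_le_mul_left Q hd])).dvd
    (Nat.mul_dvd_mul_right (Nat.dvd_factorial (by omega) hd) P)

lemma Tset_eq_image (a b : A) (x : S) :
    Tset (gen a) x (gen b) =
      spow (gen a) '' {i | 1 ≤ i ∧ hS.block (spow (gen a) i * x) = b} := by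
  ext y
  constructor
  · rintro ⟨⟨i, hi, rfl⟩, hy⟩
    exact ⟨i, ⟨hi, hS.mem_Nblock_iff.1 hy⟩, rfl⟩
  · rintro ⟨i, ⟨hi, hb⟩, rfl⟩
    exact ⟨⟨i, hi, rfl⟩, hS.mem_Nblock_iff.2 hb⟩

end IsFreeMonogenicDecomposition

theorem stmt9 {S : Type*} [Semigroup S] {A : Type*} [Finite A] (gen : A → S)
    (hcover : ∀ x : S, ∃ a : A, x ∈ Nblock (gen a))
    (hfree : ∀ (a b : A) (i j : ℕ), 1 ≤ i → 1 ≤ j →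
      spow (gen a) i = spow (gen b) j → a = b ∧ i = j) :
    {T : Set S | ∃ (a b : A) (x : S), T = Tset (gen a) x (gen b)}.Finite := by
  have hS : IsFreeMonogenicDecomposition gen := ⟨hcover, hfree⟩
  have hindex : ∀ a b : A,
      {I : Set ℕ | ∃ x, I = {i | hS.block (spow (gen a) i * x) = b}}.Finite := by
    intro a b
    obtain ⟨N, L, hL, hper⟩ := hS.exists_periodicFrom_block_spow_mul (gen a)
    refine (setOf_periodicFrom_mem_finite (N := N) hL).subset ?_
    rintro _ ⟨x, rfl⟩
    exact (hper x).comp (· = b)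
  refine (Set.finite_iUnion fun a => Set.finite_iUnion fun b =>
    (hindex a b).image fun I => spow (gen a) '' {i | 1 ≤ i ∧ i ∈ I}).subset ?_
  rintro _ ⟨a, b, x, rfl⟩
  exact Set.mem_iUnion₂.2 ⟨a, b, _, ⟨x, rfl⟩, (hS.Tset_eq_image a b x).symm⟩
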